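/- Let 0 < α < 1 and let w_n^(α) = (−1)^n·C(α,n) be the Grünwald weights. Then for every integer n ≥ 2: ((1−α)/5)·(2/n)^α < Σ_{k=n}^∞ |w_k^(α)| < 2·(2/n)^α. -/

import Mathlib

/-- The Grünwald weights `w_n^(α) = (-1)^n * C(α, n)`. -/
noncomputable def grunwaldW (α : ℝ) (n : ℕ) : ℝ :=
  (-1) ^ n * (Real.Gamma (α + 1) / (Real.Gamma ((n : ℝ) + 1) * Real.Gamma (α - (n : ℝ) + 1)))

/-!
Writing `P m = ∏_{j=1}^m (1 - α/j)`, the recurrence of the weights gives `w_{m+1} = P_{m+1} - P_m`,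
so for `0 < α < 1` the sequence `P` decreases to `0` and the tail `∑_{k ≥ m+1} |w_k|` telescopes
to `P_m`. Bernoulli's inequality `(1 + s)^α ≤ 1 + α s` makes `P_m (m+1)^α` decreasing and
`P_m m^α` increasing, whence `(1 - α) m^{-α} ≤ P_m ≤ (m+1)^{-α}`; both bounds of the theorem
follow with room to spare.
-/

open Finset Filter Topology

noncomputable def grunwaldProd (α : ℝ) (m : ℕ) : ℝ :=
  ∏ j ∈ range m, (1 - α / ((j : ℝ) + 1))

theorem grunwaldProd_succ (α : ℝ) (m : ℕ) :
    grunwaldProd α (m + 1) = grunwaldProd α m * (1 - α / ((m : ℝ) + 1)) :=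
  prod_range_succ _ _

section Recurrence

variable {α : ℝ}

theorem grunwaldW_zero (hα : ∀ n : ℤ, α ≠ n) : grunwaldW α 0 = 1 := by
  have hΓ : Real.Gamma (α + 1) ≠ 0 := Real.Gamma_ne_zero fun m h ↦ hα (-(m + 1)) (by
    push_cast; linarith)
  simp [grunwaldW, hΓ]

/-- At the poles of `Γ (α - m)` both sides vanish by the convention `x / 0 = 0`. -/
theorem grunwaldW_succ {m : ℕ} (hm : α ≠ m) :
    grunwaldW α (m + 1) = grunwaldW α m * (((m : ℝ) - α) / ((m : ℝ) + 1)) := by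
  have hsub : α - m ≠ 0 := sub_ne_zero.mpr hm
  have hm1 : (m : ℝ) + 1 ≠ 0 := by positivity
  unfold grunwaldW
  push_cast
  rw [show α - ((m : ℝ) + 1) + 1 = α - m by ring, Real.Gamma_add_one hsub,
    Real.Gamma_add_one hm1, ← neg_sub α]
  field_simp
  ring

theorem grunwaldW_succ_eq_sub (hα : ∀ n : ℤ, α ≠ n) (m : ℕ) :
    grunwaldW α (m + 1) = grunwaldProd α (m + 1) - grunwaldProd α m := by
  induction m with
  | zero =>
    rw [grunwaldW_succ (by exact_mod_cast hα 0), grunwaldW_zero hα]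
    simp [grunwaldProd]
  | succ m ih =>
    rw [grunwaldW_succ (by exact_mod_cast hα (m + 1)), ih, grunwaldProd_succ α (m + 1),
      grunwaldProd_succ α m]
    push_cast
    field_simp
    ring

end Recurrence

section Bernoulli

variable {α : ℝ}

theorem one_sub_div_mul_rpow_add_one_le (hα0 : 0 ≤ α) (hα1 : α ≤ 1) {x : ℝ} (hx : 0 < x) :
    (1 - α / x) * (x + 1) ^ α ≤ x ^ α := by
  have hsplit : (x + 1) ^ α = x ^ α * (1 + 1 / x) ^ α := by
    rw [← Real.mul_rpow hx.le (by positivity)]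
    congr 1
    field_simp
  have hbern : (1 + 1 / x) ^ α ≤ 1 + α * (1 / x) :=
    rpow_one_add_le_one_add_mul_self (by linarith [one_div_pos.mpr hx]) hα0 hα1
  have hprod : (1 - α / x) * (1 + 1 / x) ^ α ≤ 1 := by
    rcases le_or_gt (1 - α / x) 0 with hneg | hpos
    · nlinarith [Real.rpow_nonneg (by positivity : (0 : ℝ) ≤ 1 + 1 / x) α]
    · calc (1 - α / x) * (1 + 1 / x) ^ α ≤ (1 - α / x) * (1 + α * (1 / x)) :=
            mul_le_mul_of_nonneg_left hbern hpos.le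
        _ = 1 - (α / x) ^ 2 := by ring
        _ ≤ 1 := by nlinarith
  rw [hsplit, mul_left_comm]
  exact mul_le_of_le_one_right (by positivity) hprod

theorem rpow_sub_one_le_one_sub_div_mul_rpow (hα0 : 0 ≤ α) (hα1 : α ≤ 1) {y : ℝ} (hy : 1 ≤ y) :
    (y - 1) ^ α ≤ (1 - α / y) * y ^ α := by
  have hy0 : 0 < y := by linarith
  have hsplit : (y - 1) ^ α = y ^ α * (1 + -(1 / y)) ^ α := by
    rw [← Real.mul_rpow hy0.le (by rw [← sub_eq_add_neg, sub_nonneg, div_le_one hy0]; exact hy)]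
    congr 1
    field_simp
    ring
  have hbern : (1 + -(1 / y)) ^ α ≤ 1 + α * -(1 / y) :=
    rpow_one_add_le_one_add_mul_self
      (by rw [neg_le_neg_iff, div_le_one hy0]; exact hy) hα0 hα1
  rw [hsplit, mul_comm (1 - α / y)]
  calc y ^ α * (1 + -(1 / y)) ^ α ≤ y ^ α * (1 + α * -(1 / y)) :=
        mul_le_mul_of_nonneg_left hbern (by positivity)
    _ = y ^ α * (1 - α / y) := by ring

end Bernoulli

theorem Antitone.hasSum_sub_succ {f : ℕ → ℝ} {l : ℝ} (hf : Antitone f)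
    (hl : Tendsto f atTop (𝓝 l)) : HasSum (fun n ↦ f n - f (n + 1)) (f 0 - l) := by
  rw [hasSum_iff_tendsto_nat_of_nonneg fun n ↦ sub_nonneg.mpr (hf n.le_succ)]
  simp_rw [sum_range_sub']
  exact tendsto_const_nhds.sub hl

section Bounds

variable {α : ℝ}

theorem grunwaldProd_nonneg (hα1 : α ≤ 1) (m : ℕ) : 0 ≤ grunwaldProd α m :=
  prod_nonneg fun j _ ↦ sub_nonneg.mpr <| div_le_one_of_le₀ (by linarith [j.cast_nonneg (α := ℝ)])
    (by positivity)

theorem grunwaldProd_antitone (hα0 : 0 ≤ α) (hα1 : α ≤ 1) : Antitone (grunwaldProd α) :=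
  antitone_nat_of_succ_le fun m ↦ by
    rw [grunwaldProd_succ]
    exact mul_le_of_le_one_right (grunwaldProd_nonneg hα1 m) (by
      have : 0 ≤ α / ((m : ℝ) + 1) := by positivity
      linarith)

theorem grunwaldProd_mul_rpow_le_one (hα0 : 0 ≤ α) (hα1 : α ≤ 1) (m : ℕ) :
    grunwaldProd α m * ((m : ℝ) + 1) ^ α ≤ 1 := by
  induction m with
  | zero => simp [grunwaldProd]
  | succ m ih =>
    calc grunwaldProd α (m + 1) * (((m + 1 : ℕ) : ℝ) + 1) ^ α
        = grunwaldProd α m * ((1 - α / ((m : ℝ) + 1)) * ((m + 1 : ℝ) + 1) ^ α) := by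
          rw [grunwaldProd_succ]; push_cast; ring
      _ ≤ grunwaldProd α m * ((m : ℝ) + 1) ^ α :=
          mul_le_mul_of_nonneg_left (one_sub_div_mul_rpow_add_one_le hα0 hα1 (by positivity))
            (grunwaldProd_nonneg hα1 m)
      _ ≤ 1 := ih

theorem one_sub_le_grunwaldProd_mul_rpow (hα0 : 0 ≤ α) (hα1 : α ≤ 1) {m : ℕ} (hm : 1 ≤ m) :
    1 - α ≤ grunwaldProd α m * (m : ℝ) ^ α := by
  induction m, hm using Nat.le_induction with
  | base => simp [grunwaldProd]
  | succ m _ ih =>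
    calc 1 - α ≤ grunwaldProd α m * (m : ℝ) ^ α := ih
      _ ≤ grunwaldProd α m * ((1 - α / ((m : ℝ) + 1)) * ((m : ℝ) + 1) ^ α) := by
          refine mul_le_mul_of_nonneg_left ?_ (grunwaldProd_nonneg hα1 m)
          simpa using rpow_sub_one_le_one_sub_div_mul_rpow hα0 hα1 (y := (m : ℝ) + 1)
            (by simp)
      _ = grunwaldProd α (m + 1) * ((m + 1 : ℕ) : ℝ) ^ α := by
          rw [grunwaldProd_succ]; push_cast; ring

theorem tendsto_grunwaldProd_atTop (hα0 : 0 < α) (hα1 : α ≤ 1) :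
    Tendsto (grunwaldProd α) atTop (𝓝 0) := by
  have hpow : Tendsto (fun m : ℕ ↦ ((m : ℝ) + 1) ^ α) atTop atTop :=
    (tendsto_rpow_atTop hα0).comp
      (tendsto_atTop_add_const_right _ 1 tendsto_natCast_atTop_atTop)
  refine squeeze_zero (grunwaldProd_nonneg hα1) (fun m ↦ ?_) hpow.inv_tendsto_atTop
  rw [Pi.inv_apply, ← one_div, le_div_iff₀ (by positivity)]
  exact grunwaldProd_mul_rpow_le_one hα0.le hα1 m

theorem hasSum_abs_grunwaldW_tail (hα0 : 0 < α) (hα1 : α < 1) (m : ℕ) :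
    HasSum (fun k ↦ |grunwaldW α (m + 1 + k)|) (grunwaldProd α m) := by
  have hα : ∀ n : ℤ, α ≠ n := by
    rintro n rfl
    have : (0 : ℤ) < n := by exact_mod_cast hα0
    have : n < 1 := by exact_mod_cast hα1
    omega
  have hP := grunwaldProd_antitone hα0.le hα1.le
  have hterm : ∀ k, |grunwaldW α (m + 1 + k)| =
      grunwaldProd α (m + k) - grunwaldProd α (m + k + 1) := fun k ↦ by
    rw [show m + 1 + k = m + k + 1 by omega, grunwaldW_succ_eq_sub hα,
      abs_of_nonpos (sub_nonpos.mpr (hP (m + k).le_succ)), neg_sub]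
  simp_rw [hterm]
  have hlim : Tendsto (fun k ↦ grunwaldProd α (m + k)) atTop (𝓝 0) := by
    simpa only [add_comm m, Function.comp_def] using
      (tendsto_grunwaldProd_atTop hα0 hα1.le).comp (tendsto_add_atTop_nat m)
  simpa [add_assoc] using
    Antitone.hasSum_sub_succ (fun _ _ h ↦ hP (Nat.add_le_add_left h m)) hlim

end Bounds

/-- bounds for the tail sums `Σ_{k=n}^∞ |w_k^(α)|` of Grünwald weights. -/
theorem grunwaldW_tail_bounds (α : ℝ) (hα0 : 0 < α) (hα1 : α < 1) :
    ∀ n : ℕ, 2 ≤ n →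
      (1 - α) / 5 * (2 / (n : ℝ)) ^ α < ∑' k : ℕ, |grunwaldW α (n + k)| ∧
      ∑' k : ℕ, |grunwaldW α (n + k)| < 2 * (2 / (n : ℝ)) ^ α := by
  intro n hn
  obtain ⟨m, rfl⟩ : ∃ m, n = m + 1 := ⟨n - 1, by omega⟩
  rw [(hasSum_abs_grunwaldW_tail hα0 hα1 m).tsum_eq, Nat.cast_add_one,
    Real.div_rpow zero_le_two (by positivity), mul_div_assoc', mul_div_assoc']
  have hlower := one_sub_le_grunwaldProd_mul_rpow hα0.le hα1.le (m := m) (by omega)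
  have hupper := grunwaldProd_mul_rpow_le_one hα0.le hα1.le m
  have hP := grunwaldProd_nonneg hα1.le m
  have hpow : (m : ℝ) ^ α ≤ ((m : ℝ) + 1) ^ α :=
    Real.rpow_le_rpow (by positivity) (by linarith) hα0.le
  have htwo : 1 < (2 : ℝ) ^ α := Real.one_lt_rpow one_lt_two hα0
  have htwo' : (2 : ℝ) ^ α < 2 := by
    simpa using Real.rpow_lt_rpow_of_exponent_lt one_lt_two hα1
  rw [div_lt_iff₀ (by positivity), lt_div_iff₀ (by positivity)]
  constructor
  · nlinarith [mul_le_mul_of_nonneg_left hpow hP, mul_lt_mul_of_pos_left htwo' (sub_pos.mpr hα1)]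
  · linarith
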